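/- Let C > 0 and γ ≥ 0, and define φ(t) = √C + 2√C(√C − γ) / (√C(e^{2√C(T−t)} + 1) + γ(e^{2√C(T−t)} − 1)) for t ∈ [0,T]. Then for all t ∈ [0,T], |φ(t) − √C| ≤ 2|√C − γ| e^{−2√C(T−t)}. -/
import Mathlib


open Real

theorem riccati_turnpike_estimate (C γ T : ℝ) (hC : 0 < C) (hγ : 0 ≤ γ)
    (φ : ℝ → ℝ)
    (hφ : ∀ t ∈ Set.Icc 0 T, φ t = Real.sqrt C +
      2 * Real.sqrt C * (Real.sqrt C - γ) /
        (Real.sqrt C * (Real.exp (2 * Real.sqrt C * (T - t)) + 1) +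
          γ * (Real.exp (2 * Real.sqrt C * (T - t)) - 1))) :
    ∀ t ∈ Set.Icc 0 T,
      |φ t - Real.sqrt C| ≤ 2 * |Real.sqrt C - γ| * Real.exp (-(2 * Real.sqrt C * (T - t))) := by
  intro t ht
  rw [hφ t ht]
  set s := Real.sqrt C with hs
  have hspos : 0 < s := Real.sqrt_pos.mpr hC
  set a := 2 * s * (T - t) with ha
  have ha0 : 0 ≤ a := by
    have : t ≤ T := ht.2
    nlinarith [hspos]
  set E := Real.exp a with hE
  have hE1 : 1 ≤ E := Real.one_le_exp ha0
  have hEpos : 0 < E := lt_of_lt_of_le one_pos hE1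
  have hD : s * E ≤ s * (E + 1) + γ * (E - 1) := by nlinarith
  have hDpos : 0 < s * (E + 1) + γ * (E - 1) := lt_of_lt_of_le (by positivity) hD
  have key : |s + 2 * s * (s - γ) / (s * (E + 1) + γ * (E - 1)) - s|
      = 2 * s * |s - γ| / (s * (E + 1) + γ * (E - 1)) := by
    rw [add_sub_cancel_left, abs_div, abs_of_pos hDpos, abs_mul, abs_of_pos (by positivity : (0:ℝ) < 2 * s)]
  rw [key, Real.exp_neg, ← hE]
  rw [div_le_iff₀ hDpos]
  have h2 : 2 * |s - γ| * E⁻¹ * (s * E) = 2 * s * |s - γ| := by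
    field_simp
  calc 2 * s * |s - γ| = 2 * |s - γ| * E⁻¹ * (s * E) := h2.symm
    _ ≤ 2 * |s - γ| * E⁻¹ * (s * (E + 1) + γ * (E - 1)) := by
        apply mul_le_mul_of_nonneg_left hD (by positivity)
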